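/- If G is a connected closed graph with n > 1 vertices and diameter h, then the Watts–Strogatz clustering coefficient satisfies C_WS = (1/n)∑_v C_v ≥ 1/3 − (h+1)/(3n). In particular: G has at most 2 leaves, and at most h−1 vertices v with deg(v) = 2 and C_v = 0. -/
import Mathlib


def IsClosedLabeling {n : ℕ} (G : SimpleGraph (Fin n)) : Prop :=
  ∀ u v w : Fin n, G.Adj v u → G.Adj v w → u ≠ w →
    ((v < u ∧ v < w) ∨ (u < v ∧ w < v)) → G.Adj u w

/-- The local clustering coefficient; it is `0` (by junk division) when the
degree is at most `1`. -/
noncomputable def localCluster {V : Type*} (G : SimpleGraph V) (v : V) : ℚ :=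
  ({p : V × V | G.Adj v p.1 ∧ G.Adj v p.2 ∧ G.Adj p.1 p.2}.ncard : ℚ) /
    (((G.neighborSet v).ncard : ℚ) * (((G.neighborSet v).ncard : ℚ) - 1))

open SimpleGraph Finset

lemma keyUD {n : ℕ} {G : SimpleGraph (Fin n)} (hG : IsClosedLabeling G) :
    ∀ L : ℕ,
      (∀ (u w : Fin n) (p : G.Walk u w), p.length ≤ L → u < w →
        ∃ x, u < x ∧ x ≤ w ∧ G.Adj u x ∧ ∃ r : G.Walk x w, r.length < L) ∧
      (∀ (w u : Fin n) (p : G.Walk w u), p.length ≤ L → u < w →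
        ∃ x, u ≤ x ∧ x < w ∧ G.Adj w x ∧ ∃ r : G.Walk u x, r.length < L) := by
  intro L
  induction L using Nat.strong_induction_on with
  | _ L IH =>
  constructor
  · intro u w p hpL huw
    cases p with
    | nil => exact absurd huw (lt_irrefl _)
    | cons h q =>
      rename_i y
      have hq : q.length < L := by
        simp only [Walk.length_cons] at hpL; omega
      rcases lt_trichotomy u y with hy | hy | hy
      · rcases le_or_gt y w with hyw | hyw
        · exact ⟨y, hy, hyw, h, q, hq⟩
        · -- u < w < y
          obtain ⟨x, hwx, hxy, hadjyx, r, hr⟩ :=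
            (IH q.length hq).2 y w q le_rfl hyw
          have hux : u < x := lt_of_lt_of_le huw hwx
          have hadjux : G.Adj u x :=
            hG u y x h.symm hadjyx hux.ne (Or.inr ⟨hy, hxy⟩)
          rcases eq_or_lt_of_le hwx with heq | hxw
          · exact ⟨x, hux, le_of_eq heq.symm, hadjux,
              (Walk.nil : G.Walk w w).copy heq rfl, by simp; omega⟩
          · obtain ⟨x', h1, h2, h3, r', hr'⟩ :=
              (IH q.length hq).1 u w (Walk.cons hadjux r.reverse)
                (by simp only [Walk.length_cons, Walk.length_reverse]; omega) huw
            exact ⟨x', h1, h2, h3, r', hr'.trans hq⟩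
      · exact absurd hy (G.ne_of_adj h)
      · -- y < u
        obtain ⟨x, hyx, hxw, hadjyx, r, hr⟩ :=
          (IH q.length hq).1 y w q le_rfl (hy.trans huw)
        by_cases hxu : x = u
        · obtain ⟨x', h1, h2, h3, r', hr'⟩ :=
            (IH q.length hq).1 u w (r.copy hxu rfl)
              (by simp only [Walk.length_copy]; omega) huw
          exact ⟨x', h1, h2, h3, r', hr'.trans hq⟩
        · have hadjux : G.Adj u x :=
            hG u y x h.symm hadjyx (fun he => hxu he.symm) (Or.inl ⟨hy, hyx⟩)
          rcases lt_or_gt_of_ne (fun he => hxu he.symm : u ≠ x) with hux | hux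
          · exact ⟨x, hux, hxw, hadjux, r, hr.trans hq⟩
          · obtain ⟨x', h1, h2, h3, r', hr'⟩ :=
              (IH q.length hq).1 u w (Walk.cons hadjux r)
                (by simp only [Walk.length_cons]; omega) huw
            exact ⟨x', h1, h2, h3, r', hr'.trans hq⟩
  · intro w u p hpL huw
    cases p with
    | nil => exact absurd huw (lt_irrefl _)
    | cons h q =>
      rename_i y
      have hq : q.length < L := by
        simp only [Walk.length_cons] at hpL; omega
      rcases lt_trichotomy y w with hy | hy | hy
      · rcases le_or_gt u y with huy | huy
        · exact ⟨y, huy, hy, h, q.reverse, by simpa using hq⟩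
        · -- y < u < w
          obtain ⟨x, hyx, hxu, hadjyx, r, hr⟩ :=
            (IH q.length hq).1 y u q le_rfl huy
          have hxw : x < w := lt_of_le_of_lt hxu huw
          have hadjwx : G.Adj w x :=
            hG w y x h.symm hadjyx hxw.ne' (Or.inl ⟨hy, hyx⟩)
          rcases eq_or_lt_of_le hxu with heq | hxu'
          · exact ⟨x, le_of_eq heq.symm, hxw, hadjwx,
              (Walk.nil : G.Walk u u).copy rfl heq.symm, by simp; omega⟩
          · obtain ⟨x', h1, h2, h3, r', hr'⟩ :=
              (IH q.length hq).2 w u (Walk.cons hadjwx r)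
                (by simp only [Walk.length_cons]; omega) huw
            exact ⟨x', h1, h2, h3, r', hr'.trans hq⟩
      · exact absurd hy (G.ne_of_adj h).symm
      · -- w < y
        obtain ⟨x, hux, hxy, hadjyx, r, hr⟩ :=
          (IH q.length hq).2 y u q le_rfl (huw.trans hy)
        by_cases hxw : x = w
        · obtain ⟨x', h1, h2, h3, r', hr'⟩ :=
            (IH q.length hq).2 w u ((r.copy rfl hxw).reverse)
              (by simp only [Walk.length_reverse, Walk.length_copy]; omega) huw
          exact ⟨x', h1, h2, h3, r', hr'.trans hq⟩
        · have hadjwx : G.Adj w x :=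
            hG w y x h.symm hadjyx (fun he => hxw he.symm) (Or.inr ⟨hy, hxy⟩)
          rcases lt_or_gt_of_ne (fun he => hxw he.symm : w ≠ x) with hwx | hwx
          · obtain ⟨x', h1, h2, h3, r', hr'⟩ :=
              (IH q.length hq).2 w u (Walk.cons hadjwx r.reverse)
                (by simp only [Walk.length_cons, Walk.length_reverse]; omega) huw
            exact ⟨x', h1, h2, h3, r', hr'.trans hq⟩
          · exact ⟨x, hux, hwx, hadjwx, r, hr.trans hq⟩

lemma consec {n : ℕ} {G : SimpleGraph (Fin n)} (hG : IsClosedLabeling G)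
    (hconn : G.Connected) (i : ℕ) (hi : i + 1 < n) :
    G.Adj ⟨i, by omega⟩ ⟨i + 1, hi⟩ := by
  obtain ⟨p⟩ := hconn ⟨i, by omega⟩ ⟨i + 1, hi⟩
  obtain ⟨x, h1, h2, h3, -⟩ :=
    (keyUD hG p.length).1 _ _ p le_rfl (by simp [Fin.lt_def])
  have hx1 : (i : ℕ) < (x : ℕ) := by simpa [Fin.lt_def] using h1
  have hx2 : (x : ℕ) ≤ i + 1 := by simpa [Fin.le_def] using h2
  have : x = ⟨i + 1, hi⟩ := Fin.ext (by simp; omega)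
  rwa [this] at h3

lemma adj_right {n : ℕ} {G : SimpleGraph (Fin n)} (hG : IsClosedLabeling G)
    (hconn : G.Connected) {a b v : Fin n} (hadj : G.Adj a b) (hav : a < v)
    (hvb : v < b) : G.Adj v b := by
  have hbn : (b : ℕ) < n := b.isLt
  have key : ∀ m : ℕ, ∀ hm : (a : ℕ) + m < (b : ℕ),
      G.Adj ⟨(a : ℕ) + m, by omega⟩ b := by
    intro m
    induction m with
    | zero => intro _; simpa using hadj
    | succ m ih =>
      intro hm
      have h1 : G.Adj ⟨(a : ℕ) + m, by omega⟩ b := ih (by omega)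
      have h2 : G.Adj ⟨(a : ℕ) + m, by omega⟩ ⟨(a : ℕ) + m + 1, by omega⟩ :=
        consec hG hconn _ _
      refine hG _ ⟨(a : ℕ) + m, by omega⟩ _ h2 h1 ?_ (Or.inl ⟨?_, ?_⟩)
      · have hb : ((⟨(a : ℕ) + m + 1, by omega⟩ : Fin n) : ℕ) = (a : ℕ) + m + 1 := rfl
        intro he
        rw [Fin.ext_iff] at he
        simp at he; omega
      · exact Fin.mk_lt_mk.mpr (by omega)
      · exact Fin.lt_def.mpr (by simp; omega)
  rw [Fin.lt_def] at hav hvb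
  have hv : v = ⟨(a : ℕ) + ((v : ℕ) - (a : ℕ)), by omega⟩ := Fin.ext (by simp; omega)
  rw [hv]
  exact key _ (by omega)

lemma adj_left {n : ℕ} {G : SimpleGraph (Fin n)} (hG : IsClosedLabeling G)
    (hconn : G.Connected) {a b v : Fin n} (hadj : G.Adj a b) (hav : a < v)
    (hvb : v < b) : G.Adj a v := by
  have hbn : (b : ℕ) < n := b.isLt
  have key : ∀ m : ℕ, ∀ j : ℕ, ∀ hj : (a : ℕ) < j, ∀ hjm : j + m = (b : ℕ),
      G.Adj a ⟨j, by omega⟩ := by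
    intro m
    induction m with
    | zero =>
      intro j hj hjm
      have : (⟨j, by omega⟩ : Fin n) = b := Fin.ext (by simpa using hjm)
      rw [this]; exact hadj
    | succ m ih =>
      intro j hj hjm
      have h1 : G.Adj a ⟨j + 1, by omega⟩ := ih (j + 1) (by omega) (by omega)
      have h2 : G.Adj ⟨j, by omega⟩ ⟨j + 1, by omega⟩ := consec hG hconn _ _
      refine hG a ⟨j + 1, by omega⟩ ⟨j, by omega⟩ h1.symm h2.symm ?_ (Or.inr ⟨?_, ?_⟩)
      · intro he; rw [Fin.ext_iff] at he; simp at he; omega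
      · exact Fin.lt_def.mpr (by simp; omega)
      · exact Fin.mk_lt_mk.mpr (by omega)
  rw [Fin.lt_def] at hav hvb
  have hv : v = ⟨(v : ℕ), by omega⟩ := Fin.ext rfl
  rw [hv]
  exact key ((b : ℕ) - (v : ℕ)) (v : ℕ) hav (by omega)

lemma crossing {n : ℕ} {G : SimpleGraph (Fin n)} :
    ∀ {u w : Fin n} (p : G.Walk u w) (v : Fin n), u < v → v ≤ w →
      v ∈ p.support ∨ ∃ a b, G.Adj a b ∧ a < v ∧ v < b := by
  intro u w p
  induction p with
  | nil => intro v h1 h2; exact absurd (h1.trans_le h2) (lt_irrefl _)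
  | cons h q ih =>
    rename_i u' y' w'
    intro v h1 h2
    rcases lt_trichotomy y' v with hy | hy | hy
    · rcases ih v hy h2 with hs | hc
      · exact Or.inl (by rw [Walk.support_cons]; exact List.mem_cons_of_mem _ hs)
      · exact Or.inr hc
    · refine Or.inl ?_
      rw [Walk.support_cons]
      exact List.mem_cons_of_mem _ (hy ▸ q.start_mem_support)
    · exact Or.inr ⟨u', y', h, h1, hy⟩

lemma numerator_eq {n : ℕ} (G : SimpleGraph (Fin n)) (v : Fin n) [DecidableRel G.Adj] :
    {p : Fin n × Fin n | G.Adj v p.1 ∧ G.Adj v p.2 ∧ G.Adj p.1 p.2}.ncard =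
      (univ.filter fun p : Fin n × Fin n =>
        G.Adj v p.1 ∧ G.Adj v p.2 ∧ G.Adj p.1 p.2).card := by
  have h : {p : Fin n × Fin n | G.Adj v p.1 ∧ G.Adj v p.2 ∧ G.Adj p.1 p.2} =
      ↑(univ.filter fun p : Fin n × Fin n =>
        G.Adj v p.1 ∧ G.Adj v p.2 ∧ G.Adj p.1 p.2) := by
    ext p; simp
  rw [h, Set.ncard_coe_finset]

lemma cluster_nonneg {V : Type*} (G : SimpleGraph V) (v : V) : 0 ≤ localCluster G v := by
  unfold localCluster
  apply div_nonneg (by positivity)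
  rcases Nat.eq_zero_or_pos (G.neighborSet v).ncard with h | h
  · simp [h]
  · have : (1:ℚ) ≤ ((G.neighborSet v).ncard : ℚ) := by exact_mod_cast h
    nlinarith

lemma cluster_lower {n : ℕ} {G : SimpleGraph (Fin n)} (hG : IsClosedLabeling G) (v : Fin n)
    (hd : 3 ≤ (G.neighborSet v).ncard) : 1/3 ≤ localCluster G v := by
  classical
  set A := (univ.filter fun x => G.Adj v x ∧ v < x) with hA
  set B := (univ.filter fun x => G.Adj v x ∧ x < v) with hB
  set Nf := (univ.filter fun p : Fin n × Fin n =>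
    G.Adj v p.1 ∧ G.Adj v p.2 ∧ G.Adj p.1 p.2) with hNf
  have hsplit : (G.neighborSet v).ncard = A.card + B.card := by
    have h1 : G.neighborSet v = ↑(A ∪ B) := by
      ext x
      simp only [mem_neighborSet, coe_union, Set.mem_union, hA, hB, coe_filter,
        Set.mem_setOf_eq, mem_univ, true_and]
      constructor
      · intro hx
        rcases lt_trichotomy v x with hlt | heq | hlt
        · exact Or.inl ⟨hx, hlt⟩
        · exact absurd (heq ▸ hx) (G.irrefl)
        · exact Or.inr ⟨hx, hlt⟩
      · rintro (⟨hx, -⟩ | ⟨hx, -⟩) <;> exact hx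
    have hdisj : Disjoint A B := by
      rw [Finset.disjoint_left]
      intro x hx1 hx2
      simp only [hA, hB, mem_filter] at hx1 hx2
      exact absurd hx2.2.2 (lt_asymm hx1.2.2)
    rw [h1, Set.ncard_coe_finset, Finset.card_union_of_disjoint hdisj]
  have hsub : A.offDiag ∪ B.offDiag ⊆ Nf := by
    intro p hp
    simp only [Finset.mem_union, Finset.mem_offDiag, hA, hB, mem_filter, mem_univ,
      true_and, hNf] at hp ⊢
    rcases hp with ⟨⟨h1, h1'⟩, ⟨h2, h2'⟩, hne⟩ | ⟨⟨h1, h1'⟩, ⟨h2, h2'⟩, hne⟩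
    · exact ⟨h1, h2, hG p.1 v p.2 h1 h2 hne (Or.inl ⟨h1', h2'⟩)⟩
    · exact ⟨h1, h2, hG p.1 v p.2 h1 h2 hne (Or.inr ⟨h1', h2'⟩)⟩
  have hdisj2 : Disjoint A.offDiag B.offDiag := by
    rw [Finset.disjoint_left]
    intro p hp1 hp2
    simp only [Finset.mem_offDiag, hA, hB, mem_filter] at hp1 hp2
    exact absurd hp2.1.2.2 (lt_asymm hp1.1.2.2)
  have hcard : A.card * A.card - A.card + (B.card * B.card - B.card) ≤ Nf.card := by
    calc A.card * A.card - A.card + (B.card * B.card - B.card)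
        = (A.offDiag ∪ B.offDiag).card := by
          rw [Finset.card_union_of_disjoint hdisj2, Finset.offDiag_card, Finset.offDiag_card]
      _ ≤ Nf.card := Finset.card_le_card hsub
  have hC : localCluster G v = (Nf.card : ℚ) /
      (((G.neighborSet v).ncard : ℚ) * (((G.neighborSet v).ncard : ℚ) - 1)) := by
    unfold localCluster
    rw [numerator_eq]
  set a := A.card
  set b := B.card
  have hab : 3 ≤ a + b := hsplit ▸ hd
  have haa : a ≤ a * a := by
    rcases Nat.eq_zero_or_pos a with h0 | h0
    · simp [h0]
    · exact Nat.le_mul_of_pos_left a h0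
  have hbb : b ≤ b * b := by
    rcases Nat.eq_zero_or_pos b with h0 | h0
    · simp [h0]
    · exact Nat.le_mul_of_pos_left b h0
  have hN : ((a * a - a : ℕ) : ℚ) + ((b * b - b : ℕ) : ℚ) ≤ (Nf.card : ℚ) := by
    exact_mod_cast hcard
  rw [Nat.cast_sub haa, Nat.cast_sub hbb] at hN
  push_cast at hN
  rw [hC, hsplit]
  have hab' : (3:ℚ) ≤ (a:ℚ) + b := by exact_mod_cast hab
  have ha0 : (0:ℚ) ≤ (a:ℚ) := Nat.cast_nonneg a
  have hb0 : (0:ℚ) ≤ (b:ℚ) := Nat.cast_nonneg b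
  have hD : (0:ℚ) < ((a + b : ℕ):ℚ) * (((a + b : ℕ):ℚ) - 1) := by push_cast; nlinarith
  rw [div_le_div_iff₀ (by norm_num) hD]
  push_cast
  rcases eq_or_ne a b with hab2 | hab2
  · have hb' : (b:ℚ) = (a:ℚ) := by exact_mod_cast hab2.symm
    have ha2 : (2:ℚ) ≤ (a:ℚ) := by
      have h2 : 2 ≤ a := by omega
      exact_mod_cast h2
    nlinarith
  · have hsq : (1:ℚ) ≤ ((a:ℚ) - b)^2 := by
      rcases lt_or_gt_of_ne hab2 with hlt | hlt
      · have : (a:ℚ) + 1 ≤ b := by exact_mod_cast hlt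
        nlinarith
      · have : (b:ℚ) + 1 ≤ a := by exact_mod_cast hlt
        nlinarith
    nlinarith [mul_nonneg (by linarith : (0:ℚ) ≤ (a:ℚ) + b - 1) (by linarith : (0:ℚ) ≤ (a:ℚ) + b - 3)]

lemma deg_pos {n : ℕ} {G : SimpleGraph (Fin n)} (hconn : G.Connected) (hn : 1 < n)
    (v : Fin n) : (G.neighborSet v).Nonempty := by
  have hex : ∃ u : Fin n, u ≠ v := by
    by_cases hv : v = ⟨0, by omega⟩
    · exact ⟨⟨1, hn⟩, by rw [hv]; simp [Fin.ext_iff]⟩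
    · exact ⟨⟨0, by omega⟩, fun he => hv he.symm⟩
  obtain ⟨u, hu⟩ := hex
  obtain ⟨p⟩ := hconn v u
  cases p with
  | nil => exact absurd rfl hu
  | cons h q => exact ⟨_, h⟩

lemma two_case {n : ℕ} {G : SimpleGraph (Fin n)} (v : Fin n)
    (hd : (G.neighborSet v).ncard = 2) (hc : localCluster G v ≠ 0) :
    1/3 ≤ localCluster G v := by
  unfold localCluster at hc ⊢
  rw [hd] at hc ⊢
  have h2 : (((2:ℕ):ℚ)) * (((2:ℕ):ℚ) - 1) = 2 := by norm_num
  rw [h2] at hc ⊢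
  set N := {p : Fin n × Fin n | G.Adj v p.1 ∧ G.Adj v p.2 ∧ G.Adj p.1 p.2}.ncard with hNdef
  have hN : N ≠ 0 := by
    intro h0
    apply hc
    rw [h0]
    norm_num
  have h1 : (1:ℚ) ≤ (N:ℚ) := by exact_mod_cast Nat.one_le_iff_ne_zero.mpr hN
  linarith

lemma bad_char {n : ℕ} {G : SimpleGraph (Fin n)} (hG : IsClosedLabeling G)
    (hconn : G.Connected) (hn : 1 < n) {v : Fin n}
    (hd : (G.neighborSet v).ncard = 2) (hc : localCluster G v = 0) :
    (0 < (v : ℕ) ∧ (v : ℕ) < n - 1) ∧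
      ∀ a b : Fin n, G.Adj a b → a < v → v < b → False := by
  have hempty : {p : Fin n × Fin n | G.Adj v p.1 ∧ G.Adj v p.2 ∧ G.Adj p.1 p.2} = ∅ := by
    unfold localCluster at hc
    rw [hd] at hc
    have h2 : (((2:ℕ):ℚ)) * (((2:ℕ):ℚ) - 1) = 2 := by norm_num
    rw [h2] at hc
    rcases div_eq_zero_iff.mp hc with hc0 | hc0
    · exact (Set.ncard_eq_zero (Set.toFinite _)).mp (by exact_mod_cast hc0)
    · norm_num at hc0
  have hnoadj : ∀ x y : Fin n, G.Adj v x → G.Adj v y → ¬ G.Adj x y := by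
    intro x y hx hy hxy
    have : (x, y) ∈ {p : Fin n × Fin n | G.Adj v p.1 ∧ G.Adj v p.2 ∧ G.Adj p.1 p.2} :=
      ⟨hx, hy, hxy⟩
    rw [hempty] at this
    exact this
  obtain ⟨x, y, hxy, hset⟩ := Set.ncard_eq_two.mp hd
  have hx : G.Adj v x := by rw [← mem_neighborSet, hset]; simp
  have hy : G.Adj v y := by rw [← mem_neighborSet, hset]; simp
  constructor
  · constructor
    · by_contra h0
      push_neg at h0
      have hv0 : (v : ℕ) = 0 := by omega
      have hvx : v < x := by
        rw [Fin.lt_def, hv0]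
        exact Nat.pos_of_ne_zero (fun he => G.ne_of_adj hx (Fin.ext (hv0.trans he.symm)))
      have hvy : v < y := by
        rw [Fin.lt_def, hv0]
        exact Nat.pos_of_ne_zero (fun he => G.ne_of_adj hy (Fin.ext (hv0.trans he.symm)))
      exact hnoadj x y hx hy (hG x v y hx hy hxy (Or.inl ⟨hvx, hvy⟩))
    · by_contra h0
      push_neg at h0
      have hv0 : (v : ℕ) = n - 1 := by have := v.isLt; omega
      have hvx : x < v := by
        rw [Fin.lt_def, hv0]
        have := x.isLt
        have hne : (x : ℕ) ≠ n - 1 := fun he => G.ne_of_adj hx (Fin.ext (hv0.trans he.symm))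
        omega
      have hvy : y < v := by
        rw [Fin.lt_def, hv0]
        have := y.isLt
        have hne : (y : ℕ) ≠ n - 1 := fun he => G.ne_of_adj hy (Fin.ext (hv0.trans he.symm))
        omega
      exact hnoadj x y hx hy (hG x v y hx hy hxy (Or.inr ⟨hvx, hvy⟩))
  · intro a b hab ha hb
    exact hnoadj a b (adj_left hG hconn hab ha hb).symm (adj_right hG hconn hab ha hb).symm.symm hab

lemma leaf_loc {n : ℕ} {G : SimpleGraph (Fin n)} (hG : IsClosedLabeling G)
    (hconn : G.Connected) {v : Fin n} (hd : (G.neighborSet v).ncard = 1) :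
    (v : ℕ) = 0 ∨ (v : ℕ) = n - 1 := by
  by_contra hcon
  push_neg at hcon
  obtain ⟨h0, h1⟩ := hcon
  have hvn : (v : ℕ) < n := v.isLt
  have hlow : (v : ℕ) - 1 + 1 < n := by omega
  have h2 : G.Adj ⟨(v : ℕ) - 1, by omega⟩ ⟨(v : ℕ) - 1 + 1, hlow⟩ := consec hG hconn _ _
  have h3 : G.Adj ⟨(v : ℕ), by omega⟩ ⟨(v : ℕ) + 1, by omega⟩ := consec hG hconn _ _
  have hv1 : (⟨(v : ℕ) - 1 + 1, hlow⟩ : Fin n) = v := Fin.ext (by simp; omega)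
  have hv2 : (⟨(v : ℕ), by omega⟩ : Fin n) = v := Fin.ext rfl
  rw [hv1] at h2
  rw [hv2] at h3
  have hmem1 : (⟨(v : ℕ) - 1, by omega⟩ : Fin n) ∈ G.neighborSet v := h2.symm
  have hmem2 : (⟨(v : ℕ) + 1, by omega⟩ : Fin n) ∈ G.neighborSet v := h3
  have : 1 < (G.neighborSet v).ncard := by
    rw [Set.one_lt_ncard (Set.toFinite _)]
    exact ⟨_, hmem1, _, hmem2, by simp only [ne_eq, Fin.mk.injEq]; omega⟩
  omega

theorem wattsStrogatz_lower_bound {n : ℕ} (G : SimpleGraph (Fin n))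
    (hn : 1 < n) (hconn : G.Connected) (hG : IsClosedLabeling G)
    (h : ℕ) (hh : h = G.diam) :
    (1 / (n : ℚ)) * ∑ v : Fin n, localCluster G v ≥
      1 / 3 - ((h : ℚ) + 1) / (3 * (n : ℚ)) ∧
    {v : Fin n | (G.neighborSet v).ncard = 1}.ncard ≤ 2 ∧
    {v : Fin n | (G.neighborSet v).ncard = 2 ∧ localCluster G v = 0}.ncard ≤ h - 1 := by
  classical
  have hn0 : 0 < n := by omega
  set z : Fin n := ⟨0, hn0⟩ with hz
  set t : Fin n := ⟨n - 1, by omega⟩ with ht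
  haveI : Nonempty (Fin n) := ⟨z⟩
  have hzt : z ≠ t := by simp [hz, ht, Fin.ext_iff]; omega
  -- diameter facts
  have hed : G.ediam ≠ ⊤ := by
    obtain ⟨u, v, huv⟩ := G.exists_edist_eq_ediam_of_finite
    rw [← huv]
    exact (edist_ne_top_iff_reachable).mpr (hconn u v)
  have hdzt : G.dist z t ≤ h := hh ▸ dist_le_diam hed
  have h1 : 1 ≤ h := le_trans (hconn.pos_dist_of_ne hzt) hdzt
  -- leaf bound
  have hleaf_sub : {v : Fin n | (G.neighborSet v).ncard = 1} ⊆ {z, t} := by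
    intro v hv
    rcases leaf_loc hG hconn hv with h0 | h0
    · exact Or.inl (Fin.ext h0)
    · exact Or.inr (Fin.ext h0)
  have hleaf : {v : Fin n | (G.neighborSet v).ncard = 1}.ncard ≤ 2 := by
    refine le_trans (Set.ncard_le_ncard hleaf_sub (Set.toFinite _)) ?_
    refine le_trans (Set.ncard_insert_le z {t}) ?_
    simp
  -- bad set bound
  obtain ⟨p, hpath, hplen⟩ := hconn.exists_path_of_dist z t
  have hbad_sub : {v : Fin n | (G.neighborSet v).ncard = 2 ∧ localCluster G v = 0} ⊆
      ↑(p.support.toFinset \ {z, t}) := by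
    intro v hv
    obtain ⟨⟨hv0, hv1⟩, hnocross⟩ := bad_char hG hconn hn hv.1 hv.2
    have hvz : v ≠ z := by simp [hz, Fin.ext_iff]; omega
    have hvt : v ≠ t := by simp [ht, Fin.ext_iff]; omega
    have hmem : v ∈ p.support := by
      rcases crossing p v (by simp [hz, Fin.lt_def]; omega) (by simp [ht, Fin.le_def]; omega)
        with hs | ⟨a, b, hab, hav, hvb⟩
      · exact hs
      · exact absurd hab (fun hc => hnocross a b hc hav hvb)
    simp only [Finset.coe_sdiff, Set.mem_diff, Finset.coe_insert, List.coe_toFinset,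
      Finset.coe_singleton, Set.mem_setOf_eq, Set.mem_insert_iff, Set.mem_singleton_iff]
    exact ⟨hmem, by tauto⟩
  have hzsupp : z ∈ p.support.toFinset := by simp [Walk.start_mem_support]
  have htsupp : t ∈ p.support.toFinset := by simp [Walk.end_mem_support]
  have hbad : {v : Fin n | (G.neighborSet v).ncard = 2 ∧ localCluster G v = 0}.ncard ≤ h - 1 := by
    refine le_trans (Set.ncard_le_ncard hbad_sub (Set.toFinite _)) ?_
    rw [Set.ncard_coe_finset]
    have hsub2 : ({z, t} : Finset (Fin n)) ⊆ p.support.toFinset := by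
      intro x hx
      rcases Finset.mem_insert.mp hx with hx | hx
      · rwa [hx]
      · rw [Finset.mem_singleton.mp hx]; exact htsupp
    rw [Finset.card_sdiff_of_subset hsub2]
    have hc2 : ({z, t} : Finset (Fin n)).card = 2 := by
      rw [Finset.card_insert_of_notMem (by simpa using hzt), Finset.card_singleton]
    have hcs : p.support.toFinset.card = p.length + 1 := by
      rw [List.toFinset_card_of_nodup hpath.support_nodup, Walk.length_support]
    rw [hc2, hcs, hplen]
    omega
  refine ⟨?_, hleaf, hbad⟩
  -- sum bound
  set Lf := univ.filter (fun v : Fin n => (G.neighborSet v).ncard = 1) with hLf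
  set Bd := univ.filter (fun v : Fin n =>
    (G.neighborSet v).ncard = 2 ∧ localCluster G v = 0) with hBd
  set Gd := univ \ (Lf ∪ Bd) with hGd
  have hLfcard : Lf.card ≤ 2 := by
    refine le_trans (le_of_eq ?_) hleaf
    rw [← Set.ncard_coe_finset]
    congr 1
    ext v; simp [hLf]
  have hBdcard : Bd.card ≤ h - 1 := by
    refine le_trans (le_of_eq ?_) hbad
    rw [← Set.ncard_coe_finset]
    congr 1
    ext v; simp [hBd]
  have hGdlow : ∀ v ∈ Gd, 1/3 ≤ localCluster G v := by
    intro v hv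
    simp only [hGd, Finset.mem_sdiff, Finset.mem_union, hLf, hBd, Finset.mem_filter,
      Finset.mem_univ, true_and, not_or] at hv
    obtain ⟨hv1, hv2⟩ := hv
    have hpos : (G.neighborSet v).ncard ≠ 0 := by
      intro h0
      exact (deg_pos hconn hn v).ne_empty ((Set.ncard_eq_zero (Set.toFinite _)).mp h0)
    rcases Nat.lt_or_ge (G.neighborSet v).ncard 3 with hlt | hge
    · have hd2 : (G.neighborSet v).ncard = 2 := by omega
      exact two_case v hd2 (fun hc => hv2 ⟨hd2, hc⟩)
    · exact cluster_lower hG v hge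
  have hunion_le : (Lf ∪ Bd).card ≤ h + 1 := by
    refine le_trans (Finset.card_union_le _ _) ?_
    omega
  have hGdcard : (n : ℚ) - (h + 1) ≤ (Gd.card : ℚ) := by
    have h1' : Gd.card = n - (Lf ∪ Bd).card := by
      rw [hGd, Finset.card_sdiff_of_subset (Finset.subset_univ _), Finset.card_univ, Fintype.card_fin]
    have h2' : (Lf ∪ Bd).card ≤ n := le_trans (Finset.card_le_card (Finset.subset_univ _))
      (by rw [Finset.card_univ, Fintype.card_fin])
    have : ((Gd.card : ℚ)) = (n : ℚ) - ((Lf ∪ Bd).card : ℚ) := by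
      rw [h1', Nat.cast_sub h2']
    rw [this]
    have : ((Lf ∪ Bd).card : ℚ) ≤ (h : ℚ) + 1 := by exact_mod_cast hunion_le
    linarith
  have hsum : ((n : ℚ) - (h + 1)) / 3 ≤ ∑ v : Fin n, localCluster G v := by
    calc ((n : ℚ) - (h + 1)) / 3 ≤ (Gd.card : ℚ) / 3 := by linarith
      _ = ∑ _v ∈ Gd, (1/3 : ℚ) := by rw [Finset.sum_const, nsmul_eq_mul]; ring
      _ ≤ ∑ v ∈ Gd, localCluster G v := Finset.sum_le_sum hGdlow
      _ ≤ ∑ v : Fin n, localCluster G v :=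
          Finset.sum_le_sum_of_subset_of_nonneg (Finset.subset_univ _)
            (fun i _ _ => cluster_nonneg G i)
  have hnQ : (0:ℚ) < n := by exact_mod_cast hn0
  rw [ge_iff_le]
  have key : 1/3 - ((h:ℚ)+1)/(3*n) = ((n:ℚ) - ((h:ℚ)+1))/(3*n) := by
    rw [div_sub_div _ _ (by norm_num : (3:ℚ) ≠ 0) (by positivity : (3:ℚ)*n ≠ 0),
      div_eq_div_iff (by positivity) (by positivity)]
    ring
  have key2 : (1/(n:ℚ)) * (((n:ℚ) - ((h:ℚ)+1))/3) = ((n:ℚ) - ((h:ℚ)+1))/(3*n) := by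
    rw [one_div, inv_mul_eq_div, div_div, mul_comm]
  rw [key, ← key2]
  exact mul_le_mul_of_nonneg_left hsum (by positivity)
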